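/- (Excess secret key can be useful.) There exist finite alphabets 𝒳, 𝒴, 𝒵, a pmf p₀ on 𝒳, a payoff function π : 𝒳 × 𝒴 × 𝒵 → ℝ, and rates R ≥ 0 and R₀ > R such that Γ_{p₀,π}(R₀, R) > Γ_{p₀,π}(R, R); that is, a secret key rate strictly exceeding the public communication rate yields a strictly larger single-letter value than a key rate equal to the communication rate. -/

import Mathlib

open scoped BigOperators Classical

noncomputable section

/-! ### Finite probability basics -/

/-- A probability mass function on a finite type, given as a real-valued function. -/
def IsPMF {α : Type} [Fintype α] (p : α → ℝ) : Prop :=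
  (∀ a, 0 ≤ p a) ∧ ∑ a, p a = 1

/-- The probability that the random variable `A` takes the value `a` under the pmf `p`. -/
def probOf {Ω : Type} {α : Type} [Fintype Ω] (p : Ω → ℝ) (A : Ω → α) (a : α) : ℝ :=
  ∑ ω, if A ω = a then p ω else 0

/-- Shannon entropy (in bits) of the random variable `A` under the pmf `p`. -/
def entropy {Ω α : Type} [Fintype Ω] [Fintype α] (p : Ω → ℝ) (A : Ω → α) : ℝ :=
  -∑ a, probOf p A a * Real.logb 2 (probOf p A a)

/-- Conditional Shannon entropy `H(A | C)` (in bits). -/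
def condEntropy {Ω α γ : Type} [Fintype Ω] [Fintype α] [Fintype γ]
    (p : Ω → ℝ) (A : Ω → α) (C : Ω → γ) : ℝ :=
  entropy p (fun ω => (A ω, C ω)) - entropy p C

/-- Shannon mutual information `I(A;B)` (in bits). -/
def mutualInfo {Ω α β : Type} [Fintype Ω] [Fintype α] [Fintype β]
    (p : Ω → ℝ) (A : Ω → α) (B : Ω → β) : ℝ :=
  entropy p A + entropy p B - entropy p (fun ω => (A ω, B ω))

/-- Conditional Shannon mutual information `I(A;B|C)` (in bits). -/
def condMutualInfo {Ω α β γ : Type} [Fintype Ω] [Fintype α] [Fintype β] [Fintype γ]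
    (p : Ω → ℝ) (A : Ω → α) (B : Ω → β) (C : Ω → γ) : ℝ :=
  entropy p (fun ω => (A ω, C ω)) + entropy p (fun ω => (B ω, C ω))
    - entropy p (fun ω => (A ω, B ω, C ω)) - entropy p C

/-- Conditional independence `A ⟂ B | C` under the pmf `p`:
`P(A=a, B=b, C=c) · P(C=c) = P(A=a, C=c) · P(B=b, C=c)` for all `a, b, c`. -/
def CondIndep {Ω α β γ : Type} [Fintype Ω] (p : Ω → ℝ)
    (A : Ω → α) (B : Ω → β) (C : Ω → γ) : Prop :=
  ∀ a b c,
    probOf p (fun ω => (A ω, B ω, C ω)) (a, b, c) * probOf p C c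
      = probOf p (fun ω => (A ω, C ω)) (a, c) * probOf p (fun ω => (B ω, C ω)) (b, c)

/-! ### Coordination schemes and adversaries -/

/-- Cardinality of the secret-key alphabet: `max 1 ⌊2^{n R₀}⌋`. -/
def keyCard (R0 : ℝ) (n : ℕ) : ℕ := max 1 ⌊(2 : ℝ) ^ ((n : ℝ) * R0)⌋₊

/-- Cardinality of the message alphabet: `max 1 ⌊2^{n R}⌋`. -/
def msgCard (R : ℝ) (n : ℕ) : ℕ := max 1 ⌊(2 : ℝ) ^ ((n : ℝ) * R)⌋₊

/-- An `(R₀, R, n)` coordination scheme: a randomized encoder `p(j | xⁿ, k)` and a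
randomized causal decoder `{p(yᵢ | j, k, x^{i-1}, y^{i-1}, z^{i-1})}`. -/
structure Scheme (X Y Z : Type) [Fintype X] [Fintype Y] [Fintype Z]
    (R0 R : ℝ) (n : ℕ) where
  enc : (Fin n → X) → Fin (keyCard R0 n) → Fin (msgCard R n) → ℝ
  enc_pmf : ∀ x k, IsPMF (enc x k)
  dec : Fin n → Fin (msgCard R n) → Fin (keyCard R0 n) →
      (Fin n → X) → (Fin n → Y) → (Fin n → Z) → Y → ℝ
  dec_pmf : ∀ i j k x y z, IsPMF (dec i j k x y z)
  dec_causal : ∀ i j k x y z x' y' z',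
      (∀ m, m < i → x m = x' m) → (∀ m, m < i → y m = y' m) →
      (∀ m, m < i → z m = z' m) →
      dec i j k x y z = dec i j k x' y' z'

/-- An adversary strategy with full causal information:
`{p(zᵢ | j, x^{i-1}, y^{i-1}, z^{i-1})}`. -/
structure Adversary (X Y Z : Type) [Fintype X] [Fintype Y] [Fintype Z]
    (R : ℝ) (n : ℕ) where
  adv : Fin n → Fin (msgCard R n) →
      (Fin n → X) → (Fin n → Y) → (Fin n → Z) → Z → ℝ
  adv_pmf : ∀ i j x y z, IsPMF (adv i j x y z)
  adv_causal : ∀ i j x y z x' y' z',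
      (∀ m, m < i → x m = x' m) → (∀ m, m < i → y m = y' m) →
      (∀ m, m < i → z m = z' m) →
      adv i j x y z = adv i j x' y' z'

/-- Sample space of a block of length `n`: `(Xⁿ, K, J, Yⁿ, Zⁿ)`. -/
abbrev Outc (X Y Z : Type) (R0 R : ℝ) (n : ℕ) : Type :=
  (Fin n → X) × Fin (keyCard R0 n) × Fin (msgCard R n) × (Fin n → Y) × (Fin n → Z)

/-- The induced joint pmf of `(Xⁿ, K, J, Yⁿ, Zⁿ)`:
`p₀ⁿ(xⁿ)·|𝒦|⁻¹·p(j|xⁿ,k)·∏ᵢ p(yᵢ|j,k,x^{i-1},y^{i-1},z^{i-1})·p(zᵢ|j,x^{i-1},y^{i-1},z^{i-1})`. -/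
def jointPMF {X Y Z : Type} [Fintype X] [Fintype Y] [Fintype Z] {R0 R : ℝ} {n : ℕ}
    (p0 : X → ℝ) (S : Scheme X Y Z R0 R n) (A : Adversary X Y Z R n) :
    Outc X Y Z R0 R n → ℝ :=
  fun ω => (∏ i, p0 (ω.1 i)) * ((keyCard R0 n : ℝ))⁻¹ *
    S.enc ω.1 ω.2.1 ω.2.2.1 *
    ∏ i, S.dec i ω.2.2.1 ω.2.1 ω.1 ω.2.2.2.1 ω.2.2.2.2 (ω.2.2.2.1 i) *
      A.adv i ω.2.2.1 ω.1 ω.2.2.2.1 ω.2.2.2.2 (ω.2.2.2.2 i)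

/-- The expected average payoff `E[(1/n) Σᵢ π(Xᵢ, Yᵢ, Zᵢ)]`. -/
def avgValue {X Y Z : Type} [Fintype X] [Fintype Y] [Fintype Z] {R0 R : ℝ} {n : ℕ}
    (p0 : X → ℝ) (π : X → Y → Z → ℝ)
    (S : Scheme X Y Z R0 R n) (A : Adversary X Y Z R n) : ℝ :=
  ∑ ω : Outc X Y Z R0 R n, jointPMF p0 S A ω *
    ((n : ℝ)⁻¹ * ∑ i, π (ω.1 i) (ω.2.2.2.1 i) (ω.2.2.2.2 i))

/-- The robust achievable value `Π_{p₀}(R₀, R)`: the supremum over blocklengths and schemes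
of the least average payoff over all (fully informed) adversary strategies. -/
def robustValue {X Y Z : Type} [Fintype X] [Fintype Y] [Fintype Z]
    (p0 : X → ℝ) (π : X → Y → Z → ℝ) (R0 R : ℝ) : ℝ :=
  ⨆ (n : ℕ) (_ : 0 < n) (S : Scheme X Y Z R0 R n),
    ⨅ A : Adversary X Y Z R n, avgValue p0 π S A

/-! ### Single-letter quantities -/

/-- The single-letter joint pmf of `(X, Y, U, V)` built from the source `p₀` and a
conditional pmf `p(y,u,v|x)`. -/
def slJoint {X Y U V : Type} (p0 : X → ℝ) (w : X → Y × U × V → ℝ) :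
    X × Y × U × V → ℝ :=
  fun q => p0 q.1 * w q.1 q.2

/-- Membership in the single-letter region `𝒫_{p₀}(R₀,R)`: `p(y,u,v|x)` is a conditional pmf,
`X — (U,V) — Y` is a Markov chain, `R₀ ≥ I(X,Y;V|U)` and `R ≥ I(X;U,V)`. -/
def memP {X Y U V : Type} [Fintype X] [Fintype Y] [Fintype U] [Fintype V]
    (p0 : X → ℝ) (w : X → Y × U × V → ℝ) (R0 R : ℝ) : Prop :=
  (∀ x, IsPMF (w x)) ∧
  CondIndep (slJoint p0 w) (fun q => q.1) (fun q => q.2.1) (fun q => q.2.2) ∧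
  R0 ≥ condMutualInfo (slJoint p0 w)
      (fun q => (q.1, q.2.1)) (fun q => q.2.2.2) (fun q => q.2.2.1) ∧
  R ≥ mutualInfo (slJoint p0 w) (fun q => q.1) (fun q => q.2.2)

/-- The expected payoff `E[π(X, Y, z(U))]` when the adversary plays a function `z : U → Z`. -/
def slPayoff {X Y Z U V : Type} [Fintype X] [Fintype Y] [Fintype U] [Fintype V]
    (p0 : X → ℝ) (w : X → Y × U × V → ℝ) (π : X → Y → Z → ℝ) (z : U → Z) : ℝ :=
  ∑ q : X × Y × U × V, slJoint p0 w q * π q.1 q.2.1 (z q.2.2.1)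

/-- The single-letter value `Γ_{p₀,π}(R₀,R)`: the supremum over finite auxiliary alphabets
`𝒰, 𝒱` and conditional pmfs `p(y,u,v|x) ∈ 𝒫_{p₀}(R₀,R)` of `min_{z : 𝒰 → 𝒵} E[π(X,Y,z(U))]`. -/
def Gamma {X Y Z : Type} [Fintype X] [Fintype Y] [Fintype Z]
    (p0 : X → ℝ) (π : X → Y → Z → ℝ) (R0 R : ℝ) : ℝ :=
  sSup {v : ℝ | ∃ (U V : Type) (_ : Fintype U) (_ : Fintype V)
    (w : X → Y × U × V → ℝ), memP p0 w R0 R ∧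
    v = ⨅ z : U → Z, slPayoff p0 w π z}

/-!
Take a uniform bit `X`, binary actions `Y` and guesses `Z`, and the payoff `1[X = Y] - 1[Z = Y]`.

With key rate `2` and communication rate `1/4`, let `Y` be `X` flipped with probability `1/4`
and send all of it through the secret part, `V = Y` with `U` trivial. Then
`I(X; U,V) = (3/4) log₂ 3 - 1 ≤ 1/4`, `I(X,Y; V | U) = 1 ≤ 2`, and the adversary, who learns
nothing, scores `3/4 - 1/2 = 1/4`.

With both rates equal to `R`, let `a`, `b` be the conditional probabilities of `X = 1`, `Y = 1`
given `(U,V)`, and `c` that of `Y = 1` given `U`. The Markov chain gives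
`P(X = Y) = 1/2 + 2 E[(a - 1/2)(b - 1/2)]`, and guessing the likelier value of `Y` from `U` scores
`1/2 + E|c - 1/2|`. As `|2a - 1| ≤ 1`, the payoff is at most
`2 E[(a - 1/2)(b - c)] ≤ E(a - 1/2)² + E(b - c)²`, and Pinsker's inequality bounds these by
`(ln 2 / 2) I(X; U,V)` and `(ln 2 / 2) I(Y; V | U) ≤ (ln 2 / 2) I(X,Y; V | U)`. So the value is at
most `R ln 2 < 1/4` at `R = 1/4`.
-/

section ExcessKey

open Finset Real

section Probability

variable {Ω α β γ : Type} [Fintype Ω]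

lemma probOf_nonneg {p : Ω → ℝ} (hp : ∀ ω, 0 ≤ p ω) (A : Ω → α) (a : α) :
    0 ≤ probOf p A a :=
  sum_nonneg fun ω _ => by split_ifs <;> simp [hp ω]

lemma probOf_congr (p : Ω → ℝ) {A : Ω → α} {B : Ω → β} {a : α} {b : β}
    (h : ∀ ω, A ω = a ↔ B ω = b) : probOf p A a = probOf p B b := by
  simp only [probOf, h]

lemma sum_mul_comp_eq_sum_probOf [Fintype α] (p : Ω → ℝ) (A : Ω → α) (f : α → ℝ) :
    ∑ ω, p ω * f (A ω) = ∑ a, probOf p A a * f a := by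
  simp only [probOf, sum_mul, ite_mul, zero_mul]
  rw [sum_comm]
  simp

lemma probOf_eq_sum_fst [Fintype β] (p : Ω → ℝ) (A : Ω → α) (B : Ω → β) (a : α) :
    probOf p A a = ∑ b, probOf p (fun ω => (A ω, B ω)) (a, b) := by
  simp only [probOf, Prod.mk.injEq]
  rw [sum_comm]
  refine sum_congr rfl fun ω _ => ?_
  by_cases h : A ω = a <;> simp [h]

lemma probOf_eq_sum_snd [Fintype α] (p : Ω → ℝ) (A : Ω → α) (B : Ω → β) (b : β) :
    probOf p B b = ∑ a, probOf p (fun ω => (A ω, B ω)) (a, b) := by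
  simp only [probOf, Prod.mk.injEq]
  rw [sum_comm]
  refine sum_congr rfl fun ω _ => ?_
  by_cases h : B ω = b <;> simp [h]

lemma probOf_pair_le_snd {p : Ω → ℝ} (hp : ∀ ω, 0 ≤ p ω) (A : Ω → α) (B : Ω → β)
    (a : α) (b : β) : probOf p (fun ω => (A ω, B ω)) (a, b) ≤ probOf p B b :=
  sum_le_sum fun ω _ => by split_ifs with h h' <;> simp_all

lemma probOf_pair_le_fst {p : Ω → ℝ} (hp : ∀ ω, 0 ≤ p ω) (A : Ω → α) (B : Ω → β)
    (a : α) (b : β) : probOf p (fun ω => (A ω, B ω)) (a, b) ≤ probOf p A a :=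
  sum_le_sum fun ω _ => by split_ifs with h h' <;> simp_all

lemma probOf_triple_le {p : Ω → ℝ} (hp : ∀ ω, 0 ≤ p ω) (A : Ω → α) (B : Ω → β)
    (C : Ω → γ) (a : α) (b : β) (c : γ) :
    probOf p (fun ω => (A ω, B ω, C ω)) (a, b, c) ≤ probOf p (fun ω => (A ω, C ω)) (a, c) :=
  (probOf_congr p fun ω => by simp only [Prod.mk.injEq]; tauto).trans_le
    (probOf_pair_le_snd hp B (fun ω => (A ω, C ω)) b (a, c))

lemma probOf_pair_false (p : Ω → ℝ) (A : Ω → Bool) (B : Ω → β) (b : β) :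
    probOf p (fun ω => (A ω, B ω)) (false, b)
      = probOf p B b - probOf p (fun ω => (A ω, B ω)) (true, b) := by
  rw [probOf_eq_sum_snd p A B b, Fintype.sum_bool]
  ring

lemma probOf_false_eq {p : Ω → ℝ} (hp : IsPMF p) (A : Ω → Bool) :
    probOf p A false = 1 - probOf p A true := by
  have h := hp.2
  simp only [probOf] at h ⊢
  rw [← h, eq_sub_iff_add_eq, ← sum_add_distrib]
  refine sum_congr rfl fun ω _ => ?_
  cases A ω <;> simp

end Probability

section Information

variable {Ω α β γ δ : Type} [Fintype Ω] [Fintype α] [Fintype β] [Fintype γ] [Fintype δ]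

lemma entropy_eq_sum (p : Ω → ℝ) (A : Ω → α) :
    entropy p A = -∑ ω, p ω * logb 2 (probOf p A (A ω)) := by
  rw [entropy, sum_mul_comp_eq_sum_probOf p A fun a => logb 2 (probOf p A a)]

lemma entropy_congr (p : Ω → ℝ) {A : Ω → α} {B : Ω → β}
    (h : ∀ ω ω', A ω' = A ω ↔ B ω' = B ω) : entropy p A = entropy p B := by
  simp only [entropy_eq_sum, probOf_congr p (h _)]

lemma mutualInfo_eq_sum (p : Ω → ℝ) (A : Ω → α) (B : Ω → β) :
    mutualInfo p A B = ∑ a, ∑ b, probOf p (fun ω => (A ω, B ω)) (a, b) *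
      (logb 2 (probOf p (fun ω => (A ω, B ω)) (a, b)) - logb 2 (probOf p A a)
        - logb 2 (probOf p B b)) := by
  have h := sum_mul_comp_eq_sum_probOf p (fun ω => (A ω, B ω)) fun t =>
    logb 2 (probOf p (fun ω => (A ω, B ω)) t) - logb 2 (probOf p A t.1)
      - logb 2 (probOf p B t.2)
  simp only [Fintype.sum_prod_type] at h
  rw [← h]
  simp only [mutualInfo, entropy_eq_sum, mul_sub, sum_sub_distrib]
  ring

lemma condMutualInfo_eq_sum (p : Ω → ℝ) (A : Ω → α) (B : Ω → β) (C : Ω → γ) :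
    condMutualInfo p A B C = ∑ a, ∑ b, ∑ c,
      probOf p (fun ω => (A ω, B ω, C ω)) (a, b, c) *
        (logb 2 (probOf p (fun ω => (A ω, B ω, C ω)) (a, b, c)) + logb 2 (probOf p C c)
          - logb 2 (probOf p (fun ω => (A ω, C ω)) (a, c))
          - logb 2 (probOf p (fun ω => (B ω, C ω)) (b, c))) := by
  have h := sum_mul_comp_eq_sum_probOf p (fun ω => (A ω, B ω, C ω)) fun t =>
    logb 2 (probOf p (fun ω => (A ω, B ω, C ω)) t) + logb 2 (probOf p C t.2.2)
      - logb 2 (probOf p (fun ω => (A ω, C ω)) (t.1, t.2.2))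
      - logb 2 (probOf p (fun ω => (B ω, C ω)) t.2)
  simp only [Fintype.sum_prod_type] at h
  rw [← h]
  simp only [condMutualInfo, entropy_eq_sum, mul_add, mul_sub, sum_add_distrib,
    sum_sub_distrib]
  ring

lemma condMutualInfo_pair_left (p : Ω → ℝ) (A : Ω → α) (B : Ω → β) (C : Ω → γ)
    (D : Ω → δ) :
    condMutualInfo p (fun ω => (A ω, B ω)) C D
      = condMutualInfo p B C D + condMutualInfo p A C (fun ω => (B ω, D ω)) := by
  have h₁ : entropy p (fun ω => ((A ω, B ω), D ω)) = entropy p (fun ω => (A ω, B ω, D ω)) :=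
    entropy_congr p fun _ _ => by simp [and_assoc]
  have h₂ : entropy p (fun ω => ((A ω, B ω), C ω, D ω))
      = entropy p (fun ω => (A ω, C ω, B ω, D ω)) :=
    entropy_congr p fun _ _ => by simp only [Prod.mk.injEq]; tauto
  have h₃ : entropy p (fun ω => (B ω, C ω, D ω)) = entropy p (fun ω => (C ω, B ω, D ω)) :=
    entropy_congr p fun _ _ => by simp only [Prod.mk.injEq]; tauto
  simp only [condMutualInfo, h₁, h₂, h₃]
  ring

end Information

lemma hasDerivAt_binary_pinsker_gap (p : ℝ) {t : ℝ} (ht₀ : 0 < t) (ht₁ : t < 1) :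
    HasDerivAt (fun t => p * (log p - log t) + (1 - p) * (log (1 - p) - log (1 - t))
      - 2 * (p - t) ^ 2) ((t - p) * (2 * t - 1) ^ 2 / (t * (1 - t))) t := by
  have h := (((hasDerivAt_log ht₀.ne').const_sub (log p)).const_mul p).add
    ((((hasDerivAt_id t).const_sub 1).log (by simp; linarith)).const_sub
      (log (1 - p)) |>.const_mul (1 - p)) |>.sub
    ((((hasDerivAt_id t).const_sub p).pow 2).const_mul 2)
  have : 1 - t ≠ 0 := by linarith
  refine h.congr_deriv ?_
  simp only [id]
  field_simp
  ring

lemma binary_pinsker_of_le {p q : ℝ} (hp : 0 ≤ p) (hpq : p ≤ q) (hq : q < 1) :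
    2 * (p - q) ^ 2 ≤ p * (log p - log q) + (1 - p) * (log (1 - p) - log (1 - q)) := by
  set F : ℝ → ℝ := fun t =>
    p * (log p - log t) + (1 - p) * (log (1 - p) - log (1 - t)) - 2 * (p - t) ^ 2
  have hderiv : ∀ t ∈ Set.Ioo (0 : ℝ) 1,
      HasDerivAt F ((t - p) * (2 * t - 1) ^ 2 / (t * (1 - t))) t := fun t ht =>
    hasDerivAt_binary_pinsker_gap p ht.1 ht.2
  have hcont : ContinuousOn F (Set.Icc p q) := by
    intro t ht
    rcases eq_or_lt_of_le (hp.trans ht.1) with h0 | h0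
    -- at `t = p = 0` the term `p * log t` vanishes identically
    · have hp0 : p = 0 := by linarith [ht.1]
      have hF : F = fun t => -log (1 - t) - 2 * t ^ 2 := by
        funext t; simp [F, hp0]
      rw [hF, ← h0]
      exact ContinuousAt.continuousWithinAt (by fun_prop (disch := norm_num))
    · exact (hderiv t ⟨h0, by linarith [ht.2]⟩).continuousAt.continuousWithinAt
  have hmono : MonotoneOn F (Set.Icc p q) := by
    refine monotoneOn_of_hasDerivWithinAt_nonneg (convex_Icc p q) hcont
      (f' := fun t => (t - p) * (2 * t - 1) ^ 2 / (t * (1 - t)))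
      (fun t ht => ?_) fun t ht => ?_
    all_goals
      rw [interior_Icc] at ht
      have ht' : t ∈ Set.Ioo (0 : ℝ) 1 := ⟨hp.trans_lt ht.1, ht.2.trans hq⟩
    · exact (hderiv t ht').hasDerivWithinAt
    · have : 0 < t * (1 - t) := mul_pos ht'.1 (by linarith [ht'.2])
      have : 0 ≤ t - p := by linarith [ht.1]
      positivity
  have h := hmono ⟨le_rfl, hpq⟩ ⟨hpq, le_rfl⟩ hpq
  simp only [F, sub_self] at h
  linarith

lemma binary_pinsker {p q : ℝ} (hp₀ : 0 ≤ p) (hp₁ : p ≤ 1) (hq₀ : 0 ≤ q) (hq₁ : q ≤ 1)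
    (h₀ : 0 < p → 0 < q) (h₁ : p < 1 → q < 1) :
    2 * (p - q) ^ 2 ≤ p * (log p - log q) + (1 - p) * (log (1 - p) - log (1 - q)) := by
  rcases le_total p q with hpq | hqp
  · rcases eq_or_lt_of_le hp₁ with rfl | hp₁
    · obtain rfl : q = 1 := by linarith
      simp
    · exact binary_pinsker_of_le hp₀ hpq (h₁ hp₁)
  · rcases eq_or_lt_of_le hp₀ with rfl | hp₀
    · obtain rfl : q = 0 := by linarith
      simp
    · have h := binary_pinsker_of_le (p := 1 - p) (q := 1 - q) (by linarith) (by linarith)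
        (by linarith [h₀ hp₀])
      rw [sub_sub_cancel, sub_sub_cancel] at h
      linarith

lemma mul_mul_log_div_sub_log_div {x m k n : ℝ} (hx : 0 ≤ x) (hxk : 0 < x → 0 < k)
    (hm : 0 < m) (hn : 0 < n) :
    m * (x / m * (log (x / m) - log (k / n))) = x * (log x + log n - log k - log m) := by
  rcases eq_or_lt_of_le hx with rfl | hx
  · simp
  · rw [log_div hx.ne' hm.ne', log_div (hxk hx).ne' hn.ne']
    field_simp
    ring

/-- Pinsker's inequality for the Bernoulli laws `x / m` and `k / n`, multiplied by `m` and in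
bits: the shape of the two summands of a conditional mutual information with a binary variable. -/
lemma binary_pinsker_bits {x m k n : ℝ} (hx : 0 ≤ x) (hxm : x ≤ m) (hxk : x ≤ k)
    (hmn : m - x ≤ n - k) :
    2 / log 2 * ((x - k * m / n) ^ 2 / m)
      ≤ x * (logb 2 x + logb 2 n - logb 2 k - logb 2 m)
        + (m - x) * (logb 2 (m - x) + logb 2 n - logb 2 (n - k) - logb 2 m) := by
  rcases eq_or_lt_of_le (hx.trans hxm) with rfl | hm
  · obtain rfl : x = 0 := by linarith
    simp
  have hn : 0 < n := by linarith
  have hL : 0 < log 2 := log_pos one_lt_two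
  have key := mul_le_mul_of_nonneg_left (binary_pinsker (p := x / m) (q := k / n)
    (by positivity) ((div_le_one hm).2 hxm) (div_nonneg (hx.trans hxk) hn.le)
    ((div_le_one hn).2 (by linarith))
    (fun h => div_pos (((div_pos_iff_of_pos_right hm).1 h).trans_le hxk) hn)
    (fun h => (div_lt_one hn).2 (by linarith [(div_lt_one hm).1 h]))) hm.le
  rw [one_sub_div hm.ne', one_sub_div hn.ne', mul_add,
    mul_mul_log_div_sub_log_div hx (fun h => h.trans_le hxk) hm hn,
    mul_mul_log_div_sub_log_div (by linarith) (fun h => by linarith) hm hn] at key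
  simp only [logb]
  calc 2 / log 2 * ((x - k * m / n) ^ 2 / m) = m * (2 * (x / m - k / n) ^ 2) / log 2 := by
        field_simp
    _ ≤ (x * (log x + log n - log k - log m)
          + (m - x) * (log (m - x) + log n - log (n - k) - log m)) / log 2 := by gcongr
    _ = _ := by field_simp

section InformationPinsker

variable {Ω β γ : Type} [Fintype Ω] [Fintype β] [Fintype γ]

theorem mutualInfo_ge_of_bool {p : Ω → ℝ} (hp : IsPMF p) (A : Ω → Bool) (B : Ω → β) :
    2 / log 2 * ∑ b, (probOf p (fun ω => (A ω, B ω)) (true, b)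
        - probOf p A true * probOf p B b) ^ 2 / probOf p B b
      ≤ mutualInfo p A B := by
  simp only [mutualInfo_eq_sum, Fintype.sum_bool, ← sum_add_distrib, mul_sum]
  gcongr with b _
  have h := binary_pinsker_bits (n := 1) (probOf_nonneg hp.1 _ (true, b))
    (probOf_pair_le_snd hp.1 A B true b) (probOf_pair_le_fst hp.1 A B true b)
    (by rw [← probOf_pair_false, ← probOf_false_eq hp]; exact probOf_pair_le_fst hp.1 A B _ b)
  rw [div_one, logb_one, add_zero, add_zero] at h
  rwa [probOf_pair_false, probOf_false_eq hp]

theorem condMutualInfo_ge_of_bool {p : Ω → ℝ} (hp : ∀ ω, 0 ≤ p ω) (A : Ω → Bool)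
    (B : Ω → β) (C : Ω → γ) :
    2 / log 2 * ∑ b, ∑ c, (probOf p (fun ω => (A ω, B ω, C ω)) (true, b, c)
        - probOf p (fun ω => (A ω, C ω)) (true, c) * probOf p (fun ω => (B ω, C ω)) (b, c)
          / probOf p C c) ^ 2 / probOf p (fun ω => (B ω, C ω)) (b, c)
      ≤ condMutualInfo p A B C := by
  simp only [condMutualInfo_eq_sum, Fintype.sum_bool, ← sum_add_distrib, mul_sum]
  gcongr with b _ c _
  rw [probOf_pair_false p A (fun ω => (B ω, C ω)), probOf_pair_false p A C]
  refine binary_pinsker_bits (probOf_nonneg hp _ _) (probOf_pair_le_snd hp _ _ _ _)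
    (probOf_triple_le hp A B C _ _ _) ?_
  rw [← probOf_pair_false, ← probOf_pair_false]
  exact probOf_triple_le hp A B C _ _ _

theorem condMutualInfo_nonneg_of_bool {p : Ω → ℝ} (hp : ∀ ω, 0 ≤ p ω) (A : Ω → Bool)
    (B : Ω → β) (C : Ω → γ) : 0 ≤ condMutualInfo p A B C :=
  le_trans (mul_nonneg (div_nonneg zero_le_two (log_pos one_lt_two).le) <|
    sum_nonneg fun _ _ => sum_nonneg fun _ _ => div_nonneg (sq_nonneg _) (probOf_nonneg hp _ _))
    (condMutualInfo_ge_of_bool hp A B C)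

end InformationPinsker

def matchPayoff (x y z : Bool) : ℝ :=
  (if x = y then 1 else 0) - (if z = y then 1 else 0)

lemma matchPayoff_le_one (x y z : Bool) : matchPayoff x y z ≤ 1 := by
  unfold matchPayoff; split_ifs <;> norm_num

lemma two_mul_sub_half_mul_sub_half_div_le {a b m c M : ℝ} (ha : 0 ≤ a) (ham : a ≤ m)
    (hmM : m ≤ M) :
    2 * (a - m / 2) * (b - m / 2) / m
      ≤ ((a - m / 2) ^ 2 + (b - c * m / M) ^ 2) / m + m * |c - M / 2| / M := by
  rcases eq_or_lt_of_le (ha.trans ham) with rfl | hm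
  · simp
  have hM : 0 < M := hm.trans_le hmM
  have habs : |2 * (a - m / 2)| ≤ m := abs_le.2 ⟨by linarith, by linarith⟩
  calc 2 * (a - m / 2) * (b - m / 2) / m
      = 2 * (a - m / 2) * (b - c * m / M) / m + 2 * (a - m / 2) * (c - M / 2) / M := by
        field_simp
        ring
    _ ≤ ((a - m / 2) ^ 2 + (b - c * m / M) ^ 2) / m + m * |c - M / 2| / M := by
        gcongr ?_ / _ + ?_ / _
        · exact two_mul_le_add_sq _ _
        · calc 2 * (a - m / 2) * (c - M / 2) ≤ |2 * (a - m / 2)| * |c - M / 2| := by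
                rw [← abs_mul]; exact le_abs_self _
            _ ≤ m * |c - M / 2| := by gcongr

lemma sum_agreement_sub_le {ι : Type} [Fintype ι] {a b m : ι → ℝ} {c M : ℝ}
    (ha : ∀ i, 0 ≤ a i) (ham : ∀ i, a i ≤ m i) (hM : ∑ i, m i = M) :
    ∑ i, (m i / 2 + 2 * (a i - m i / 2) * (b i - m i / 2) / m i) - (M / 2 + |c - M / 2|)
      ≤ ∑ i, ((a i - m i / 2) ^ 2 + (b i - c * m i / M) ^ 2) / m i := by
  have hmM : ∀ i, m i ≤ M := fun i =>
    hM ▸ single_le_sum (fun j _ => (ha j).trans (ham j)) (mem_univ i)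
  have hrest : ∑ i, m i * |c - M / 2| / M ≤ |c - M / 2| := by
    rw [← sum_div, ← sum_mul, hM]
    rcases eq_or_ne M 0 with hM0 | hM0
    · simp [hM0]
    · rw [mul_div_cancel_left₀ _ hM0]
  have hterm := sum_le_sum fun i (_ : i ∈ univ) =>
    two_mul_sub_half_mul_sub_half_div_le (b := b i) (c := c) (ha i) (ham i) (hmM i)
  have hhalf : ∑ i, m i / 2 = M / 2 := by rw [← sum_div, hM]
  rw [sum_add_distrib] at hterm ⊢
  linarith

section Game

variable {Ω μ ν : Type} [Fintype Ω] (p : Ω → ℝ) (X Y : Ω → Bool) (U : Ω → μ) (V : Ω → ν)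

lemma sum_mul_matchPayoff [Fintype μ] [Fintype ν] (z : μ → Bool) :
    ∑ ω, p ω * matchPayoff (X ω) (Y ω) (z (U ω))
      = ∑ u, (∑ v, (probOf p (fun ω => (X ω, Y ω, U ω, V ω)) (true, true, u, v)
          + probOf p (fun ω => (X ω, Y ω, U ω, V ω)) (false, false, u, v))
        - probOf p (fun ω => (Y ω, U ω)) (z u, u)) := by
  have h₁ := sum_mul_comp_eq_sum_probOf p (fun ω => (X ω, Y ω, U ω, V ω))
    fun t => if t.1 = t.2.1 then (1 : ℝ) else 0
  have h₂ := sum_mul_comp_eq_sum_probOf p (fun ω => (Y ω, U ω))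
    fun t => if z t.2 = t.1 then (1 : ℝ) else 0
  simp only [matchPayoff, mul_sub, sum_sub_distrib]
  rw [h₁, h₂]
  simp only [Fintype.sum_prod_type, Fintype.sum_bool, sum_add_distrib]
  congr 1
  · simp
  · rw [← sum_add_distrib]
    refine sum_congr rfl fun u _ => ?_
    cases z u <;> simp

lemma probOf_agree_of_condIndep {γ : Type} (hp : ∀ ω, 0 ≤ p ω) {C : Ω → γ}
    (hXY : CondIndep p X Y C) (c : γ) :
    probOf p (fun ω => (X ω, Y ω, C ω)) (true, true, c)
        + probOf p (fun ω => (X ω, Y ω, C ω)) (false, false, c)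
      = probOf p C c / 2 + 2 * (probOf p (fun ω => (X ω, C ω)) (true, c) - probOf p C c / 2)
          * (probOf p (fun ω => (Y ω, C ω)) (true, c) - probOf p C c / 2) / probOf p C c := by
  have hle : ∀ x y, probOf p (fun ω => (X ω, Y ω, C ω)) (x, y, c) ≤ probOf p C c := fun x y =>
    (probOf_triple_le hp X Y C x y c).trans (probOf_pair_le_snd hp X C x c)
  rcases eq_or_ne (probOf p C c) 0 with hm | hm
  · simp only [hm, div_zero, zero_div, add_zero]
    linarith [hle true true, hle false false,
      probOf_nonneg hp (fun ω => (X ω, Y ω, C ω)) (true, true, c),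
      probOf_nonneg hp (fun ω => (X ω, Y ω, C ω)) (false, false, c)]
  have htt := hXY true true c
  have hff := hXY false false c
  rw [probOf_pair_false p X C, probOf_pair_false p Y C] at hff
  field_simp
  linear_combination 2 * htt + 2 * hff

lemma exists_guess_ge :
    ∃ z : μ → Bool, ∀ u, probOf p U u / 2 + |probOf p (fun ω => (Y ω, U ω)) (true, u)
      - probOf p U u / 2| ≤ probOf p (fun ω => (Y ω, U ω)) (z u, u) := by
  refine ⟨fun u => decide (probOf p U u ≤ 2 * probOf p (fun ω => (Y ω, U ω)) (true, u)), ?_⟩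
  intro u
  by_cases h : probOf p U u ≤ 2 * probOf p (fun ω => (Y ω, U ω)) (true, u)
  · rw [abs_of_nonneg (by linarith)]
    simp [h]
  · rw [abs_of_neg (by linarith)]
    simp [h, probOf_pair_false p Y U]
    linarith

lemma exists_sum_mul_matchPayoff_le_sum_sq [Fintype μ] [Fintype ν] (hp : ∀ ω, 0 ≤ p ω)
    (hXY : CondIndep p X Y (fun ω => (U ω, V ω))) :
    ∃ z : μ → Bool, ∑ ω, p ω * matchPayoff (X ω) (Y ω) (z (U ω))
      ≤ ∑ u, ∑ v, (((probOf p (fun ω => (X ω, U ω, V ω)) (true, u, v)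
            - probOf p (fun ω => (U ω, V ω)) (u, v) / 2) ^ 2
          + (probOf p (fun ω => (Y ω, U ω, V ω)) (true, u, v)
            - probOf p (fun ω => (Y ω, U ω)) (true, u) * probOf p (fun ω => (U ω, V ω)) (u, v)
              / probOf p U u) ^ 2) / probOf p (fun ω => (U ω, V ω)) (u, v)) := by
  obtain ⟨z, hz⟩ := exists_guess_ge p Y U
  refine ⟨z, ?_⟩
  rw [sum_mul_matchPayoff p X Y U V]
  refine sum_le_sum fun u _ => ?_
  have h := sum_agreement_sub_le (ι := ν)
    (b := fun v => probOf p (fun ω => (Y ω, U ω, V ω)) (true, u, v))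
    (c := probOf p (fun ω => (Y ω, U ω)) (true, u))
    (fun v => probOf_nonneg hp _ (true, u, v))
    (fun v => probOf_pair_le_snd hp X _ true (u, v)) (probOf_eq_sum_fst p U V u).symm
  have hagree := fun v => probOf_agree_of_condIndep p X Y hp hXY (u, v)
  beta_reduce at hagree
  rw [sum_congr rfl fun v _ => hagree v]
  linarith [hz u]

theorem exists_sum_mul_matchPayoff_le [Fintype μ] [Fintype ν] (hp : IsPMF p)
    (hX : probOf p X true = 1 / 2) (hXY : CondIndep p X Y (fun ω => (U ω, V ω))) :
    ∃ z : μ → Bool, ∑ ω, p ω * matchPayoff (X ω) (Y ω) (z (U ω))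
      ≤ log 2 / 2 * (mutualInfo p X (fun ω => (U ω, V ω))
        + condMutualInfo p (fun ω => (X ω, Y ω)) V U) := by
  have of_pinsker {Q I : ℝ} (h : 2 / log 2 * Q ≤ I) : Q ≤ log 2 / 2 * I := by
    have hL : 0 < log 2 := log_pos one_lt_two
    calc Q = log 2 / 2 * (2 / log 2 * Q) := by field_simp
      _ ≤ log 2 / 2 * I := by gcongr
  have hQX := of_pinsker (mutualInfo_ge_of_bool hp X fun ω => (U ω, V ω))
  have hchain : condMutualInfo p Y V U ≤ condMutualInfo p (fun ω => (X ω, Y ω)) V U := by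
    rw [condMutualInfo_pair_left]
    linarith [condMutualInfo_nonneg_of_bool hp.1 X V fun ω => (Y ω, U ω)]
  have hQY := of_pinsker ((condMutualInfo_ge_of_bool hp.1 Y V U).trans hchain)
  have hVU : ∀ u v, probOf p (fun ω => (V ω, U ω)) (v, u)
      = probOf p (fun ω => (U ω, V ω)) (u, v) := fun u v =>
    probOf_congr p fun ω => by simp only [Prod.mk.injEq]; tauto
  have hYVU : ∀ u v, probOf p (fun ω => (Y ω, V ω, U ω)) (true, v, u)
      = probOf p (fun ω => (Y ω, U ω, V ω)) (true, u, v) := fun u v =>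
    probOf_congr p fun ω => by simp only [Prod.mk.injEq]; tauto
  simp only [Fintype.sum_prod_type, hX, one_div, inv_mul_eq_div] at hQX
  simp only [hVU, hYVU] at hQY
  rw [sum_comm] at hQY
  obtain ⟨z, hz⟩ := exists_sum_mul_matchPayoff_le_sum_sq p X Y U V hp.1 hXY
  refine ⟨z, hz.trans ?_⟩
  simp only [add_div, sum_add_distrib]
  linarith

end Game

section SingleLetter

variable {X Y Z U V : Type} [Fintype X] [Fintype Y] [Fintype U] [Fintype V]
  {p0 : X → ℝ} {w : X → Y × U × V → ℝ}

lemma isPMF_slJoint (hp0 : IsPMF p0) (hw : ∀ x, IsPMF (w x)) : IsPMF (slJoint p0 w) :=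
  ⟨fun q => mul_nonneg (hp0.1 q.1) ((hw q.1).1 q.2), by
    simp [slJoint, Fintype.sum_prod_type, ← mul_sum, (hw _).2, hp0.2]⟩

lemma probOf_slJoint_fst (hw : ∀ x, IsPMF (w x)) (x : X) :
    probOf (slJoint p0 w) (fun q => q.1) x = p0 x := by
  have h := (hw x).2
  simp only [Fintype.sum_prod_type] at h
  simp [probOf, slJoint, Fintype.sum_prod_type, ← mul_sum, h]

lemma slPayoff_le {f : X → Y → Z → ℝ} {c : ℝ} (hf : ∀ x y z, f x y z ≤ c) (hp0 : IsPMF p0)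
    (hw : ∀ x, IsPMF (w x)) (z : U → Z) : slPayoff p0 w f z ≤ c := by
  have h := isPMF_slJoint hp0 hw
  calc slPayoff p0 w f z ≤ ∑ q, slJoint p0 w q * c :=
        sum_le_sum fun q _ => mul_le_mul_of_nonneg_left (hf _ _ _) (h.1 q)
    _ = c := by rw [← sum_mul, h.2, one_mul]

end SingleLetter

def uniformBit : Bool → ℝ := fun _ => 1 / 2

lemma isPMF_uniformBit : IsPMF uniformBit :=
  ⟨fun _ => by norm_num [uniformBit], by norm_num [uniformBit]⟩

theorem gamma_matchPayoff_le {R0 R : ℝ} (hRR0 : 0 ≤ R + R0) :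
    Gamma uniformBit matchPayoff R0 R ≤ log 2 / 2 * (R + R0) := by
  have hlog : 0 ≤ log 2 / 2 := div_nonneg (log_nonneg one_le_two) zero_le_two
  refine Real.sSup_le ?_ (mul_nonneg hlog hRR0)
  rintro _ ⟨U, V, _, _, w, ⟨hw, hXY, hR0, hR⟩, rfl⟩
  obtain ⟨z, hz⟩ := exists_sum_mul_matchPayoff_le (slJoint uniformBit w) (fun q => q.1)
    (fun q => q.2.1) (fun q => q.2.2.1) (fun q => q.2.2.2) (isPMF_slJoint isPMF_uniformBit hw)
    (probOf_slJoint_fst hw true) hXY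
  exact (ciInf_le (Set.finite_range _).bddBelow z).trans
    (hz.trans (mul_le_mul_of_nonneg_left (add_le_add hR hR0) hlog))

/-- `Y` is `X` through a binary symmetric channel with crossover probability `1/4`, `U` is
trivial and `V = Y`: the whole action is protected by the key. -/
def noisyCopy (x : Bool) (r : Bool × Unit × Bool) : ℝ :=
  if r.2.2 = r.1 then (if r.1 = x then 3 / 4 else 1 / 4) else 0

lemma isPMF_noisyCopy (x : Bool) : IsPMF (noisyCopy x) := by
  refine ⟨fun ⟨y, _, v⟩ => ?_, ?_⟩
  · unfold noisyCopy; split_ifs <;> norm_num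
  · cases x <;> simp [noisyCopy, Fintype.sum_prod_type] <;> norm_num

lemma logb_three_le : logb 2 3 ≤ 5 / 3 := by
  have h : logb 2 (3 ^ 3) ≤ logb 2 (2 ^ 5) :=
    logb_le_logb_of_le one_lt_two (by norm_num) (by norm_num)
  rw [logb_pow, logb_pow, logb_self_eq_one one_lt_two] at h
  push_cast at h
  linarith

lemma memP_noisyCopy : memP uniformBit noisyCopy 2 (1 / 4) := by
  have h2 : logb 2 (1 / 2 : ℝ) = -1 := by simp
  have h8 : logb 2 (1 / 8 : ℝ) = -3 := by
    rw [show (1 / 8 : ℝ) = (2 ^ 3)⁻¹ by norm_num, logb_inv, logb_pow,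
      logb_self_eq_one one_lt_two]
    norm_num
  have h38 : logb 2 (3 / 8 : ℝ) = logb 2 3 - 3 := by
    rw [logb_div (by norm_num) (by norm_num), show (8 : ℝ) = 2 ^ 3 by norm_num, logb_pow,
      logb_self_eq_one one_lt_two]
    norm_num
  refine ⟨isPMF_noisyCopy, ?_, ?_, ?_⟩
  · rintro x y ⟨u, v⟩
    cases x <;> cases y <;> cases v <;>
      simp [probOf, slJoint, noisyCopy, uniformBit, Fintype.sum_prod_type]
  · have h : condMutualInfo (slJoint uniformBit noisyCopy) (fun q => (q.1, q.2.1))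
        (fun q => q.2.2.2) (fun q => q.2.2.1) = 1 := by
      norm_num [condMutualInfo, entropy, probOf, slJoint, noisyCopy, uniformBit,
        Fintype.sum_prod_type, h2]
    norm_num [h]
  · have h : mutualInfo (slJoint uniformBit noisyCopy) (fun q => q.1) (fun q => q.2.2)
        = 3 / 4 * logb 2 3 - 1 := by
      norm_num [mutualInfo, entropy, probOf, slJoint, noisyCopy, uniformBit,
        Fintype.sum_prod_type, h2, h8, h38]
      ring
    linarith [logb_three_le]

lemma slPayoff_noisyCopy (z : Unit → Bool) :
    slPayoff uniformBit noisyCopy matchPayoff z = 1 / 4 := by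
  cases hz : z () <;>
    simp [slPayoff, slJoint, noisyCopy, uniformBit, matchPayoff, Fintype.sum_prod_type, hz] <;>
    norm_num

theorem le_gamma_matchPayoff : 1 / 4 ≤ Gamma uniformBit matchPayoff 2 (1 / 4) := by
  refine (le_ciInf fun z => (slPayoff_noisyCopy z).ge).trans (le_csSup ⟨1, ?_⟩
    ⟨Unit, Bool, _, _, noisyCopy, memP_noisyCopy, rfl⟩)
  rintro _ ⟨U, V, _, _, w, hw, rfl⟩
  exact (ciInf_le (Set.finite_range _).bddBelow fun _ => true).trans
    (slPayoff_le matchPayoff_le_one isPMF_uniformBit hw.1 _)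

end ExcessKey

/-- **Excess secret key can be useful.**  There are finite alphabets, a source pmf, a payoff
function and rates `R ≥ 0`, `R₀ > R` such that `Γ_{p₀,π}(R₀,R) > Γ_{p₀,π}(R,R)`: a secret key
rate strictly exceeding the public communication rate strictly beats a key rate equal to the
communication rate. -/
theorem excess_secret_key_useful :
    ∃ (X Y Z : Type) (_ : Fintype X) (_ : Fintype Y) (_ : Fintype Z)
      (_ : Nonempty X) (_ : Nonempty Y) (_ : Nonempty Z)
      (p0 : X → ℝ) (_ : IsPMF p0) (π : X → Y → Z → ℝ) (R R0 : ℝ),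
      0 ≤ R ∧ R < R0 ∧ Gamma p0 π R0 R > Gamma p0 π R R := by
  refine ⟨Bool, Bool, Bool, inferInstance, inferInstance, inferInstance, ⟨true⟩, ⟨true⟩,
    ⟨true⟩, uniformBit, isPMF_uniformBit, matchPayoff, 1 / 4, 2, by norm_num, by norm_num, ?_⟩
  have hupper := gamma_matchPayoff_le (R0 := 1 / 4) (R := 1 / 4) (by norm_num)
  linarith [le_gamma_matchPayoff, Real.log_two_lt_d9]
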